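/- Let D be the derivation of ℚ[x,y,z,p,q] with D(x)=xzq, D(y)=yzp, D(z)=D(p)=D(q)=xyz. For every n ≥ 0, D^n(z) = z · Σ_{σ ∈ Q_n} (xy)^{lap(σ)} q^{dasc(σ)} p^{dp(σ)} z^{2n − 2·lap(σ) − dasc(σ) − dp(σ)}, an identity in ℚ[x,y,z,p,q]. -/

import Mathlib

open Finset MvPolynomial

/-- Stirling permutations of order `n`, encoded as functions `Fin (2*n) → Fin (n+1)`
in one-line notation (position `i` holds the letter `σ (i) ∈ {1,…,n}`), such that each
letter `1,…,n` occurs exactly twice and all entries between the two occurrences of a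
letter are larger than that letter. -/
def StirlingSet (n : ℕ) : Finset (Fin (2*n) → Fin (n+1)) :=
  Finset.univ.filter (fun σ =>
    (∀ v : Fin (n+1), (v : ℕ) ≠ 0 →
        (Finset.univ.filter (fun i => σ i = v)).card = 2) ∧
    (∀ i j k : Fin (2*n), i < j → j < k → σ i = σ k → σ i < σ j))

/-- The letter at position `i ∈ {1,…,2n}` of a Stirling permutation, with the
convention that positions outside this range (in particular position `0`) hold `0`. -/
def sval {n : ℕ} (σ : Fin (2*n) → Fin (n+1)) (i : ℕ) : ℕ :=
  if h : 1 ≤ i ∧ i ≤ 2*n then (σ ⟨i - 1, by omega⟩ : ℕ) else 0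

/-- The number of ascent-plateaus: indices `2 ≤ i ≤ 2n-1` with `σ_{i-1} < σ_i = σ_{i+1}`. -/
def apQ {n : ℕ} (σ : Fin (2*n) → Fin (n+1)) : ℕ :=
  ((Finset.Icc 2 (2*n - 1)).filter
    (fun i => sval σ (i-1) < sval σ i ∧ sval σ i = sval σ (i+1))).card

/-- The number of left ascent-plateaus: indices `1 ≤ i ≤ 2n-1` with
`σ_{i-1} < σ_i = σ_{i+1}`, where `σ_0 = 0`. -/
def lapQ {n : ℕ} (σ : Fin (2*n) → Fin (n+1)) : ℕ :=
  ((Finset.Icc 1 (2*n - 1)).filter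
    (fun i => sval σ (i-1) < sval σ i ∧ sval σ i = sval σ (i+1))).card

/-- The number of double ascents: indices `1 ≤ i ≤ 2n-1` with
`σ_{i-1} < σ_i < σ_{i+1}`, where `σ_0 = 0`. -/
def dascQ {n : ℕ} (σ : Fin (2*n) → Fin (n+1)) : ℕ :=
  ((Finset.Icc 1 (2*n - 1)).filter
    (fun i => sval σ (i-1) < sval σ i ∧ sval σ i < sval σ (i+1))).card

/-- The number of descent-plateaus: indices `2 ≤ i ≤ 2n-1` with
`σ_{i-1} > σ_i = σ_{i+1}`. -/
def dpQ {n : ℕ} (σ : Fin (2*n) → Fin (n+1)) : ℕ :=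
  ((Finset.Icc 2 (2*n - 1)).filter
    (fun i => sval σ i < sval σ (i-1) ∧ sval σ i = sval σ (i+1))).card

/-- The number of ascents: indices `1 ≤ i ≤ 2n-1` with `σ_i < σ_{i+1}` or `i = 1`. -/
def ascQ {n : ℕ} (σ : Fin (2*n) → Fin (n+1)) : ℕ :=
  ((Finset.Icc 1 (2*n - 1)).filter
    (fun i => sval σ i < sval σ (i+1) ∨ i = 1)).card

/-- The number of plateaus: indices `1 ≤ i ≤ 2n-1` with `σ_i = σ_{i+1}`. -/
def platQ {n : ℕ} (σ : Fin (2*n) → Fin (n+1)) : ℕ :=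
  ((Finset.Icc 1 (2*n - 1)).filter (fun i => sval σ i = sval σ (i+1))).card

/-- The flag ascent-plateau number: `2·ap(σ)+1` if `σ_1 = σ_2`, and `2·ap(σ)` otherwise. -/
def fapQ {n : ℕ} (σ : Fin (2*n) → Fin (n+1)) : ℕ :=
  if 1 ≤ n ∧ sval σ 1 = sval σ 2 then 2 * apQ σ + 1 else 2 * apQ σ

/-!
Every Stirling permutation of order `n + 1` arises in exactly one way by inserting the plateau
`(n+1)(n+1)` into one of the `2n + 1` gaps of a Stirling permutation of order `n`. Reading the
permutation as a word padded with zeros, each statistic counts windows `(σ_{i-1}, σ_i, σ_{i+1})`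
of a given shape, so an insertion only changes the windows around the chosen gap. Depending on
that gap, the insertion raises `dp` by one (gap just before a left ascent-plateau), trades a
double ascent for a left ascent-plateau (gap just before a double ascent), raises `dasc` by one
(gap inside a left ascent-plateau), trades a descent-plateau for a left ascent-plateau (gap inside
a descent-plateau), or adds a left ascent-plateau (any of the remaining
`2n + 1 - 2 lap - dasc - dp` gaps). These five cases are the five terms of
`D (z (xy)^lap q^dasc p^dp z^e)`, coming from `D y`, `D q`, `D x`, `D p` and `D z` respectively,
so `D` maps the weight sum of order `n` to the weight sum of order `n + 1`.
-/

structure IsStirlingWord (n : ℕ) (f : ℕ → ℕ) : Prop where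
  le : ∀ i, f i ≤ n
  eq_zero : ∀ i, i = 0 ∨ 2 * n < i → f i = 0
  card_eq_two : ∀ v, 1 ≤ v → v ≤ n → #{i ∈ Icc 1 (2 * n) | f i = v} = 2
  lt_of_between : ∀ i j k, 1 ≤ i → i < j → j < k → k ≤ 2 * n → f i = f k → f i < f j

section Words

variable {n : ℕ}

lemma sval_le (σ : Fin (2 * n) → Fin (n + 1)) (i : ℕ) : sval σ i ≤ n := by
  unfold sval
  split
  · exact Nat.lt_succ_iff.mp (Fin.is_lt _)
  · exact Nat.zero_le _

lemma sval_eq_zero (σ : Fin (2 * n) → Fin (n + 1)) {i : ℕ} (hi : i = 0 ∨ 2 * n < i) :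
    sval σ i = 0 := by
  unfold sval
  rw [dif_neg (by omega)]

lemma sval_succ (σ : Fin (2 * n) → Fin (n + 1)) (a : Fin (2 * n)) :
    sval σ (a + 1) = σ a := by
  simp [sval]

lemma sval_injective : Function.Injective (sval (n := n)) := by
  intro σ τ h
  funext a
  apply Fin.ext
  rw [← sval_succ, ← sval_succ, h]

def ofWord (m : ℕ) (f : ℕ → ℕ) : Fin (2 * m) → Fin (m + 1) :=
  fun i => ⟨min (f (i + 1)) m, Nat.lt_succ_of_le (min_le_right _ _)⟩

lemma sval_ofWord {m : ℕ} {f : ℕ → ℕ} (hle : ∀ i, f i ≤ m)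
    (hzero : ∀ i, i = 0 ∨ 2 * m < i → f i = 0) : sval (ofWord m f) = f := by
  funext i
  unfold sval ofWord
  split
  · simp only [show i - 1 + 1 = i by omega, min_eq_left (hle i)]
  · exact (hzero i (by omega)).symm

lemma sval_of_mem_Icc (σ : Fin (2 * n) → Fin (n + 1)) {i : ℕ} (hi : 1 ≤ i ∧ i ≤ 2 * n) :
    sval σ i = σ ⟨i - 1, by omega⟩ := by
  rw [sval, dif_pos hi]

lemma card_filter_sval_eq (σ : Fin (2 * n) → Fin (n + 1)) (v : Fin (n + 1)) :
    #{i | σ i = v} = #{i ∈ Icc 1 (2 * n) | sval σ i = v} := by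
  refine card_nbij (fun i => (i : ℕ) + 1) ?_ ?_ ?_
  · intro a ha
    simp only [coe_filter, mem_univ, true_and, Set.mem_ofPred_eq, mem_Icc] at ha ⊢
    exact ⟨⟨by omega, by omega⟩, by rw [sval_succ, ha]⟩
  · intro a _ b _ h
    exact Fin.ext (by simpa using h)
  · intro j hj
    simp only [coe_filter, mem_Icc, Set.mem_ofPred_eq] at hj
    refine ⟨⟨j - 1, by omega⟩, ?_, by simp; omega⟩
    simpa [sval_of_mem_Icc σ hj.1, Fin.ext_iff] using hj.2

lemma mem_StirlingSet_iff (σ : Fin (2 * n) → Fin (n + 1)) :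
    σ ∈ StirlingSet n ↔ IsStirlingWord n (sval σ) := by
  simp only [StirlingSet, mem_filter, mem_univ, true_and]
  constructor
  · rintro ⟨hcard, hbetween⟩
    refine ⟨sval_le σ, fun i hi => sval_eq_zero σ hi, fun v hv1 hvn => ?_, ?_⟩
    · have key := hcard ⟨v, by omega⟩ (by simp; omega)
      rwa [card_filter_sval_eq] at key
    · intro i j k hi hij hjk hk he
      rw [sval_of_mem_Icc σ ⟨hi, by omega⟩, sval_of_mem_Icc σ ⟨by omega, hk⟩, Fin.val_inj] at he
      rw [sval_of_mem_Icc σ ⟨hi, by omega⟩, sval_of_mem_Icc σ ⟨by omega, by omega⟩, Fin.val_fin_lt]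
      exact hbetween _ _ _ (Fin.mk_lt_mk.mpr (by omega)) (Fin.mk_lt_mk.mpr (by omega)) he
  · intro h
    refine ⟨fun v hv => ?_, fun i j k hij hjk he => ?_⟩
    · rw [card_filter_sval_eq]
      exact h.card_eq_two v (by omega) (by omega)
    · have key := h.lt_of_between (i + 1) (j + 1) (k + 1) (by omega) (by simpa using hij)
        (by simpa using hjk) (by omega) (by simp [sval_succ, he])
      simpa [sval_succ] using key

end Words

namespace IsStirlingWord

variable {n : ℕ} {f : ℕ → ℕ}

lemma mem_Icc_of_pos (h : IsStirlingWord n f) {i : ℕ} (hi : 0 < f i) : 1 ≤ i ∧ i ≤ 2 * n := by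
  by_contra hout
  have := h.eq_zero i (by omega)
  omega

/-- The `n` letters occurring twice each fill all `2n` positions. -/
lemma pos (h : IsStirlingWord n f) {i : ℕ} (hi : 1 ≤ i ∧ i ≤ 2 * n) : 0 < f i := by
  have hfib : #{j ∈ Icc 1 (2 * n) | f j ≠ 0} = ∑ v ∈ Icc 1 n, #{j ∈ Icc 1 (2 * n) | f j = v} := by
    rw [card_eq_sum_card_fiberwise (f := f) (t := Icc 1 n) fun j hj => by
      have := h.le j
      simp only [coe_filter, Set.mem_ofPred_eq] at hj
      simp only [coe_Icc, Set.mem_Icc]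
      omega]
    refine sum_congr rfl fun v hv => ?_
    rw [filter_filter]
    exact congrArg card (filter_congr fun j _ => by simp only [mem_Icc] at hv; omega)
  rw [sum_congr rfl fun v hv => h.card_eq_two v (mem_Icc.mp hv).1 (mem_Icc.mp hv).2, sum_const,
    Nat.card_Icc, smul_eq_mul, show (n + 1 - 1) * 2 = #(Icc 1 (2 * n)) by simp; ring] at hfib
  exact Nat.pos_of_ne_zero (card_filter_eq_iff.mp hfib i (mem_Icc.mpr hi))

lemma exists_ne_eq (h : IsStirlingWord n f) {i : ℕ} (hi : 0 < f i) :
    ∃ j, 1 ≤ j ∧ j ≤ 2 * n ∧ j ≠ i ∧ f j = f i := by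
  obtain ⟨j, hj, hji⟩ := exists_mem_ne
    (by rw [h.card_eq_two (f i) hi (h.le i)]; omega) i
  simp only [mem_filter, mem_Icc] at hj
  exact ⟨j, hj.1.1, hj.1.2, hji, hj.2⟩

lemma le_succ_of_pred_lt (h : IsStirlingWord n f) {i : ℕ} (hasc : f (i - 1) < f i) :
    f i ≤ f (i + 1) := by
  by_contra! hdesc
  have hi := h.mem_Icc_of_pos (i := i) (by omega)
  obtain ⟨j, hj1, hj2, hji, hj⟩ := h.exists_ne_eq (i := i) (by omega)
  rcases Nat.lt_or_gt_of_ne hji with hlt | hgt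
  · have hj' : j ≠ i - 1 := fun e => by rw [e] at hj; omega
    have := h.lt_of_between j (i - 1) i hj1 (by omega) (by omega) hi.2 (by rw [hj])
    omega
  · have hj' : j ≠ i + 1 := fun e => by rw [e] at hj; omega
    have := h.lt_of_between i (i + 1) j hi.1 (by omega) (by omega) hj2 hj.symm
    omega

lemma succ_ne_add_two (h : IsStirlingWord n f) {i : ℕ} (hpos : 0 < f i)
    (heq : f i = f (i + 1)) : f (i + 1) ≠ f (i + 2) := by
  intro heq'
  have hi := h.mem_Icc_of_pos hpos
  have hi2 := h.mem_Icc_of_pos (i := i + 2) (by omega)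
  have hsub : ({i, i + 1, i + 2} : Finset ℕ) ⊆ {j ∈ Icc 1 (2 * n) | f j = f i} := by
    intro j hj
    simp only [mem_insert, mem_singleton] at hj
    simp only [mem_filter, mem_Icc]
    rcases hj with rfl | rfl | rfl <;> omega
  have := card_le_card hsub
  rw [h.card_eq_two (f i) hpos (h.le i), card_insert_of_notMem (by simp),
    card_pair (by omega)] at this
  omega

end IsStirlingWord

def insertPair (g M : ℕ) (f : ℕ → ℕ) : ℕ → ℕ :=
  fun j => if j ≤ g then f j else if j ≤ g + 2 then M else f (j - 2)

def deletePair (g : ℕ) (f : ℕ → ℕ) : ℕ → ℕ :=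
  fun j => if j ≤ g then f j else f (j + 2)

section InsertPair

variable {n g M : ℕ} {f : ℕ → ℕ}

lemma insertPair_of_le {j : ℕ} (hj : j ≤ g) : insertPair g M f j = f j := by
  simp [insertPair, hj]

lemma insertPair_of_mid {j : ℕ} (hj : g < j) (hj' : j ≤ g + 2) : insertPair g M f j = M := by
  simp [insertPair, hj', show ¬ j ≤ g by omega]

lemma insertPair_of_lt {j : ℕ} (hj : g + 2 < j) : insertPair g M f j = f (j - 2) := by
  simp [insertPair, show ¬ j ≤ g by omega, show ¬ j ≤ g + 2 by omega]

lemma insertPair_shift (j : ℕ) : insertPair g M f (if j ≤ g then j else j + 2) = f j := by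
  split_ifs with hj
  · exact insertPair_of_le hj
  · simp [insertPair_of_lt (show g + 2 < j + 2 by omega)]

lemma insertPair_le {m : ℕ} (hf : ∀ i, f i ≤ m) (hM : M ≤ m) (j : ℕ) :
    insertPair g M f j ≤ m := by
  have := hf j
  have := hf (j - 2)
  simp only [insertPair]
  split_ifs <;> omega

lemma insertPair_eq_zero (hg : g ≤ 2 * n) (hf : ∀ i, i = 0 ∨ 2 * n < i → f i = 0) {j : ℕ}
    (hj : j = 0 ∨ 2 * (n + 1) < j) : insertPair g M f j = 0 := by
  rcases hj with rfl | hj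
  · rw [insertPair_of_le (Nat.zero_le g), hf 0 (Or.inl rfl)]
  · rw [insertPair_of_lt (by omega), hf _ (by omega)]

lemma insertPair_eq_iff (hf : ∀ i, f i < M) (j : ℕ) :
    insertPair g M f j = M ↔ j = g + 1 ∨ j = g + 2 := by
  have := hf j
  have := hf (j - 2)
  simp only [insertPair]
  split_ifs <;> omega

lemma deletePair_insertPair : deletePair g (insertPair g M f) = f := by
  funext j
  simp only [deletePair]
  split_ifs with hj
  · exact insertPair_of_le hj
  · simp [insertPair_of_lt (show g + 2 < j + 2 by omega)]

lemma insertPair_deletePair (h1 : f (g + 1) = M) (h2 : f (g + 2) = M) :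
    insertPair g M (deletePair g f) = f := by
  funext j
  simp only [insertPair, deletePair]
  split_ifs with hj hj' hj''
  · rfl
  · rcases (show j = g + 1 ∨ j = g + 2 by omega) with rfl | rfl
    exacts [h1.symm, h2.symm]
  · omega
  · rw [Nat.sub_add_cancel (by omega)]

lemma card_filter_insertPair (hg : g ≤ 2 * n) {v : ℕ} (hv : v ≠ M) :
    #{j ∈ Icc 1 (2 * (n + 1)) | insertPair g M f j = v} = #{j ∈ Icc 1 (2 * n) | f j = v} := by
  refine card_nbij' (fun j => if j ≤ g then j else j - 2) (fun j => if j ≤ g then j else j + 2)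
    ?_ ?_ ?_ ?_
  · intro j hj
    rw [mem_coe, mem_filter] at hj ⊢
    simp only [mem_Icc, insertPair] at hj ⊢
    split_ifs at hj ⊢ <;> omega
  · intro j hj
    rw [mem_coe, mem_filter] at hj ⊢
    simp only [mem_Icc, insertPair_shift] at hj ⊢
    exact ⟨by split_ifs <;> omega, hj.2⟩
  · intro j hj
    rw [mem_coe, mem_filter] at hj
    simp only [mem_Icc, insertPair] at hj
    dsimp only
    split_ifs at hj ⊢ <;> omega
  · intro j _
    dsimp only
    split_ifs <;> omega

end InsertPair

namespace IsStirlingWord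

variable {n g : ℕ} {f : ℕ → ℕ}

protected lemma insertPair (h : IsStirlingWord n f) (hg : g ≤ 2 * n) :
    IsStirlingWord (n + 1) (insertPair g (n + 1) f) := by
  have hlt : ∀ i, f i < n + 1 := fun i => Nat.lt_succ_of_le (h.le i)
  refine ⟨insertPair_le (fun i => (hlt i).le) le_rfl, fun j => insertPair_eq_zero hg h.eq_zero,
    fun v hv hvn => ?_, fun i j k hi hij hjk hk he => ?_⟩
  · rcases (show v = n + 1 ∨ v ≤ n by omega) with rfl | hvn
    · rw [filter_congr fun j _ => insertPair_eq_iff hlt j]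
      convert card_pair (show g + 1 ≠ g + 2 by omega) using 2
      ext j
      simp only [mem_filter, mem_Icc, mem_insert, mem_singleton]
      omega
    · rw [card_filter_insertPair hg (by omega)]
      exact h.card_eq_two v hv hvn
  · have htop : ∀ x, x ≤ g ∨ g + 2 < x ↔ insertPair g (n + 1) f x ≠ n + 1 := fun x => by
      rw [Ne, insertPair_eq_iff hlt]
      omega
    have hback : ∀ x, x ≤ g ∨ g + 2 < x →
        insertPair g (n + 1) f x = f (if x ≤ g then x else x - 2) := fun x hx => by
      split_ifs with hxg
      · exact insertPair_of_le hxg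
      · exact insertPair_of_lt (by omega)
    by_cases hM : insertPair g (n + 1) f i = n + 1
    · have := (htop i).not_left.mpr hM
      have := (htop k).not_left.mpr (he ▸ hM)
      omega
    have hi' := (htop i).mpr hM
    have hk' := (htop k).mpr (he ▸ hM)
    by_cases hMj : insertPair g (n + 1) f j = n + 1
    · rw [hMj, hback i hi']
      exact hlt _
    have hj' := (htop j).mpr hMj
    rw [hback i hi', hback k hk'] at he
    rw [hback i hi', hback j hj']
    exact h.lt_of_between _ _ _ (by split_ifs <;> omega) (by split_ifs <;> omega)
      (by split_ifs <;> omega) (by split_ifs <;> omega) he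

lemma of_insertPair (h : IsStirlingWord (n + 1) (insertPair g (n + 1) f)) (hg : g ≤ 2 * n)
    (hle : ∀ i, f i ≤ n) (hzero : ∀ i, i = 0 ∨ 2 * n < i → f i = 0) : IsStirlingWord n f := by
  refine ⟨hle, hzero, fun v hv hvn => ?_, fun i j k hi hij hjk hk he => ?_⟩
  · rw [← card_filter_insertPair (M := n + 1) hg (by omega)]
    exact h.card_eq_two v hv (by omega)
  · rw [← insertPair_shift (g := g) (M := n + 1) (f := f) i,
      ← insertPair_shift (g := g) (M := n + 1) (f := f) k] at he
    rw [← insertPair_shift (g := g) (M := n + 1) (f := f) i,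
      ← insertPair_shift (g := g) (M := n + 1) (f := f) j]
    exact h.lt_of_between _ _ _ (by split_ifs <;> omega) (by split_ifs <;> omega)
      (by split_ifs <;> omega) (by split_ifs <;> omega) he

lemma exists_eq_top_iff (h : IsStirlingWord (n + 1) f) :
    ∃ g ≤ 2 * n, ∀ j, f j = n + 1 ↔ j = g + 1 ∨ j = g + 2 := by
  obtain ⟨x, y, hxy, hs⟩ := Finset.card_eq_two.mp (h.card_eq_two (n + 1) (by omega) le_rfl)
  wlog hlt : x < y generalizing x y
  · exact this y x hxy.symm (by rw [hs, pair_comm]) (by omega)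
  have hmem : ∀ j, f j = n + 1 ↔ j = x ∨ j = y := fun j => by
    have hj := congrArg (j ∈ ·) hs
    simp only [mem_filter, mem_Icc, mem_insert, mem_singleton, eq_iff_iff] at hj
    rw [← hj]
    exact ⟨fun e => ⟨h.mem_Icc_of_pos (by omega), e⟩, And.right⟩
  have hx := h.mem_Icc_of_pos (i := x) (by rw [(hmem x).mpr (Or.inl rfl)]; omega)
  have hy := h.mem_Icc_of_pos (i := y) (by rw [(hmem y).mpr (Or.inr rfl)]; omega)
  have hfx := (hmem x).mpr (Or.inl rfl)
  have hadj : y = x + 1 := by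
    by_contra hne
    have := h.lt_of_between x (x + 1) y hx.1 (by omega) (by omega) hy.2
      (by rw [hfx, (hmem y).mpr (Or.inr rfl)])
    have := h.le (x + 1)
    omega
  refine ⟨x - 1, by omega, fun j => ?_⟩
  rw [hmem j]
  omega

end IsStirlingWord

section InsertTop

variable {n : ℕ}

def insertTop (σ : Fin (2 * n) → Fin (n + 1)) (g : ℕ) : Fin (2 * (n + 1)) → Fin (n + 1 + 1) :=
  ofWord (n + 1) (insertPair g (n + 1) (sval σ))

lemma sval_insertTop (σ : Fin (2 * n) → Fin (n + 1)) {g : ℕ} (hg : g ≤ 2 * n) :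
    sval (insertTop σ g) = insertPair g (n + 1) (sval σ) :=
  sval_ofWord (insertPair_le (fun i => (sval_le σ i).trans n.le_succ) le_rfl)
    (fun _ => insertPair_eq_zero hg fun _ => sval_eq_zero σ)

lemma insertTop_mem {σ : Fin (2 * n) → Fin (n + 1)} (hσ : σ ∈ StirlingSet n) {g : ℕ}
    (hg : g ≤ 2 * n) : insertTop σ g ∈ StirlingSet (n + 1) := by
  rw [mem_StirlingSet_iff, sval_insertTop σ hg]
  exact ((mem_StirlingSet_iff σ).mp hσ).insertPair hg

lemma insertTop_inj {σ σ' : Fin (2 * n) → Fin (n + 1)} {g g' : ℕ} (hg : g ≤ 2 * n)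
    (hg' : g' ≤ 2 * n) (h : insertTop σ g = insertTop σ' g') : σ = σ' ∧ g = g' := by
  have hw := congrArg sval h
  rw [sval_insertTop σ hg, sval_insertTop σ' hg'] at hw
  have htop : ∀ (τ : Fin (2 * n) → Fin (n + 1)) (g j : ℕ),
      insertPair g (n + 1) (sval τ) j = n + 1 ↔ j = g + 1 ∨ j = g + 2 :=
    fun τ g => insertPair_eq_iff fun i => Nat.lt_succ_of_le (sval_le τ i)
  have h1 := (htop σ' g' (g + 1)).mp (by rw [← hw, htop σ g]; omega)
  have h2 := (htop σ g (g' + 1)).mp (by rw [hw, htop σ' g']; omega)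
  obtain rfl : g = g' := by omega
  refine ⟨sval_injective ?_, rfl⟩
  rw [← deletePair_insertPair (g := g) (M := n + 1) (f := sval σ), hw, deletePair_insertPair]

lemma exists_insertTop_eq {τ : Fin (2 * (n + 1)) → Fin (n + 1 + 1)}
    (hτ : τ ∈ StirlingSet (n + 1)) : ∃ σ ∈ StirlingSet n, ∃ g ≤ 2 * n, insertTop σ g = τ := by
  have hF := (mem_StirlingSet_iff τ).mp hτ
  obtain ⟨g, hg, htop⟩ := hF.exists_eq_top_iff
  set f := deletePair g (sval τ)
  have hfle : ∀ i, f i ≤ n := fun i => by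
    have := hF.le (if i ≤ g then i else i + 2)
    have := htop (if i ≤ g then i else i + 2)
    simp only [f, deletePair] at *
    split_ifs at * <;> omega
  have hf0 : ∀ i, i = 0 ∨ 2 * n < i → f i = 0 := fun i hi => by
    simp only [f, deletePair]
    split_ifs <;> exact hF.eq_zero _ (by omega)
  have hins : insertPair g (n + 1) f = sval τ :=
    insertPair_deletePair ((htop _).mpr (Or.inl rfl)) ((htop _).mpr (Or.inr rfl))
  have hσ : sval (ofWord n f) = f := sval_ofWord hfle hf0
  refine ⟨ofWord n f, ?_, g, hg, sval_injective ?_⟩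
  · rw [mem_StirlingSet_iff, hσ]
    exact (hins ▸ hF).of_insertPair hg hfle hf0
  · rw [sval_insertTop _ hg, hσ, hins]

theorem sum_StirlingSet_succ {M : Type*} [AddCommMonoid M]
    (φ : (Fin (2 * (n + 1)) → Fin (n + 1 + 1)) → M) :
    ∑ τ ∈ StirlingSet (n + 1), φ τ =
      ∑ σ ∈ StirlingSet n, ∑ g ∈ range (2 * n + 1), φ (insertTop σ g) := by
  rw [← sum_product']
  symm
  refine sum_bij (fun p _ => insertTop p.1 p.2) ?_ ?_ ?_ fun _ _ => rfl
  · rintro ⟨σ, g⟩ hp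
    rw [mem_product, mem_range] at hp
    exact insertTop_mem hp.1 (by omega)
  · rintro ⟨σ, g⟩ hp ⟨σ', g'⟩ hp' h
    rw [mem_product, mem_range] at hp hp'
    obtain ⟨rfl, rfl⟩ := insertTop_inj (by omega) (by omega) h
    rfl
  · intro τ hτ
    obtain ⟨σ, hσ, g, hg, rfl⟩ := exists_insertTop_eq hτ
    exact ⟨(σ, g), mem_product.mpr ⟨hσ, mem_range.mpr (by omega)⟩, rfl⟩

end InsertTop

section Windows

variable (P : ℕ → ℕ → ℕ → Prop) [∀ a b c, Decidable (P a b c)]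

def windowCount (f : ℕ → ℕ) (N : ℕ) : ℕ :=
  #{i ∈ range N | P (f (i - 1)) (f i) (f (i + 1))}

/-- Inserting `M M` after position `g` replaces the two windows centred at `g` and `g + 1` by
four windows, and shifts all later windows by two. -/
lemma windowCount_insertPair (f : ℕ → ℕ) (M : ℕ) {g N : ℕ} (hg : g ≤ N) :
    windowCount P (insertPair g M f) (N + 4) + (if P (f (g - 1)) (f g) (f (g + 1)) then 1 else 0)
        + (if P (f g) (f (g + 1)) (f (g + 2)) then 1 else 0) =
      windowCount P f (N + 2) + (if P (f (g - 1)) (f g) M then 1 else 0)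
        + (if P (f g) M M then 1 else 0) + (if P M M (f (g + 1)) then 1 else 0)
        + (if P M (f (g + 1)) (f (g + 2)) then 1 else 0) := by
  obtain ⟨d, rfl⟩ := Nat.exists_eq_add_of_le hg
  set F := insertPair g M f
  let χ (h : ℕ → ℕ) (i : ℕ) : ℕ := if P (h (i - 1)) (h i) (h (i + 1)) then 1 else 0
  have hlow : ∀ i ∈ range g, χ F i = χ f i := fun i hi => by
    rw [mem_range] at hi
    simp only [χ, F, insertPair_of_le (show i - 1 ≤ g by omega), insertPair_of_le hi.le,
      insertPair_of_le (show i + 1 ≤ g by omega)]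
  have hhigh : ∀ k ∈ range d, χ F (g + (4 + k)) = χ f (g + (2 + k)) := fun k _ => by
    simp only [χ, F, insertPair_of_lt (show g + 2 < g + (4 + k) - 1 by omega),
      insertPair_of_lt (show g + 2 < g + (4 + k) by omega),
      insertPair_of_lt (show g + 2 < g + (4 + k) + 1 by omega)]
    congr 3 <;> omega
  have hF : F (g - 1) = f (g - 1) ∧ F g = f g ∧ F (g + 1) = M ∧ F (g + 2) = M ∧
      F (g + 3) = f (g + 1) ∧ F (g + 4) = f (g + 2) :=
    ⟨insertPair_of_le (Nat.sub_le g 1), insertPair_of_le le_rfl,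
      insertPair_of_mid (by omega) (by omega), insertPair_of_mid (by omega) le_rfl,
      insertPair_of_lt (by omega), insertPair_of_lt (by omega)⟩
  simp only [windowCount, card_filter]
  change ∑ i ∈ range (g + d + 4), χ F i + χ f g + χ f (g + 1) =
    ∑ i ∈ range (g + d + 2), χ f i + _ + _ + _ + _
  rw [show g + d + 4 = g + (4 + d) by ring, show g + d + 2 = g + (2 + d) by ring,
    sum_range_add _ g (4 + d), sum_range_add _ g (2 + d), sum_range_add _ 4 d,
    sum_range_add _ 2 d, sum_congr rfl hlow, sum_congr rfl hhigh]
  simp only [sum_range_succ, sum_range_zero, χ, add_zero, zero_add, Nat.add_sub_cancel,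
    show g + 2 - 1 = g + 1 from rfl, show g + 3 - 1 = g + 2 from rfl,
    show g + 1 + 1 = g + 2 from rfl, hF]
  ring

variable {f : ℕ → ℕ} {N : ℕ}

lemma card_filter_range_window_succ (hP : ∀ a b c, P a b c → 0 < b) (hf : f 0 = 0) :
    #{g ∈ range (N + 1) | P (f g) (f (g + 1)) (f (g + 2))} = windowCount P f (N + 2) := by
  have h0 : ¬ P (f (0 - 1)) (f 0) (f (0 + 1)) := fun h => by have := hP _ _ _ h; omega
  rw [windowCount, card_filter, card_filter, sum_range_succ' _ (N + 1), if_neg h0, add_zero]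
  rfl

lemma card_filter_range_window (hP : ∀ a b c, P a b c → 0 < b) (hf : f (N + 1) = 0) :
    #{g ∈ range (N + 1) | P (f (g - 1)) (f g) (f (g + 1))} = windowCount P f (N + 2) := by
  have hN : ¬ P (f (N + 1 - 1)) (f (N + 1)) (f (N + 1 + 1)) := fun h => by
    have := hP _ _ _ h; omega
  rw [windowCount, card_filter, card_filter, sum_range_succ _ (N + 1), if_neg hN, add_zero]

end Windows

abbrev LeftAscentPlateau (a b c : ℕ) : Prop := a < b ∧ b = c

abbrev DoubleAscent (a b c : ℕ) : Prop := a < b ∧ b < c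

/-- Unlike `dpQ`, the pattern requires a nonzero middle letter, so that windows running off the
end of the word never count. -/
abbrev DescentPlateau (a b c : ℕ) : Prop := 0 < b ∧ b < a ∧ b = c

section Statistics

variable {n : ℕ}

lemma windowCount_sval (P : ℕ → ℕ → ℕ → Prop) [∀ a b c, Decidable (P a b c)]
    (hP : ∀ a b c, P a b c → 0 < b ∧ 0 < c) (σ : Fin (2 * n) → Fin (n + 1)) :
    windowCount P (sval σ) (2 * n + 2) =
      #{i ∈ Icc 1 (2 * n - 1) | P (sval σ (i - 1)) (sval σ i) (sval σ (i + 1))} := by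
  unfold windowCount
  congr 1
  ext i
  simp only [mem_filter, mem_range, mem_Icc]
  refine ⟨fun ⟨_, hi⟩ => ⟨?_, hi⟩, fun ⟨_, hi⟩ => ⟨by omega, hi⟩⟩
  obtain ⟨hb, hc⟩ := hP _ _ _ hi
  by_contra hout
  rcases (show i = 0 ∨ 2 * n < i + 1 by omega) with h0 | h0
  · rw [sval_eq_zero σ (Or.inl h0)] at hb
    omega
  · rw [sval_eq_zero σ (Or.inr h0)] at hc
    omega

lemma lapQ_eq_windowCount (σ : Fin (2 * n) → Fin (n + 1)) :
    lapQ σ = windowCount LeftAscentPlateau (sval σ) (2 * n + 2) :=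
  (windowCount_sval LeftAscentPlateau (fun _ _ _ h => ⟨by omega, by omega⟩) σ).symm

lemma dascQ_eq_windowCount (σ : Fin (2 * n) → Fin (n + 1)) :
    dascQ σ = windowCount DoubleAscent (sval σ) (2 * n + 2) :=
  (windowCount_sval DoubleAscent (fun _ _ _ h => ⟨by omega, by omega⟩) σ).symm

lemma dpQ_eq_windowCount {σ : Fin (2 * n) → Fin (n + 1)} (hσ : IsStirlingWord n (sval σ)) :
    dpQ σ = windowCount DescentPlateau (sval σ) (2 * n + 2) := by
  rw [windowCount_sval DescentPlateau (fun _ _ _ h => ⟨by omega, by omega⟩) σ, dpQ]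
  congr 1
  ext i
  simp only [mem_filter, mem_Icc]
  constructor
  · rintro ⟨hi, hlt, heq⟩
    exact ⟨⟨by omega, hi.2⟩, hσ.pos ⟨by omega, by omega⟩, hlt, heq⟩
  · rintro ⟨hi, hpos, hlt, heq⟩
    refine ⟨⟨?_, hi.2⟩, hlt, heq⟩
    by_contra h1
    rw [show i - 1 = 0 by omega, sval_eq_zero σ (Or.inl rfl)] at hlt
    omega

end Statistics

section InsertionRules

variable {n g : ℕ}

lemma windowCount_insertTop (P : ℕ → ℕ → ℕ → Prop) [∀ a b c, Decidable (P a b c)]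
    (σ : Fin (2 * n) → Fin (n + 1)) (hg : g ≤ 2 * n) :
    windowCount P (sval (insertTop σ g)) (2 * (n + 1) + 2)
        + (if P (sval σ (g - 1)) (sval σ g) (sval σ (g + 1)) then 1 else 0)
        + (if P (sval σ g) (sval σ (g + 1)) (sval σ (g + 2)) then 1 else 0) =
      windowCount P (sval σ) (2 * n + 2)
        + (if P (sval σ (g - 1)) (sval σ g) (n + 1) then 1 else 0)
        + (if P (sval σ g) (n + 1) (n + 1) then 1 else 0)
        + (if P (n + 1) (n + 1) (sval σ (g + 1)) then 1 else 0)
        + (if P (n + 1) (sval σ (g + 1)) (sval σ (g + 2)) then 1 else 0) := by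
  rw [sval_insertTop σ hg]
  exact windowCount_insertPair P (sval σ) (n + 1) hg

lemma lapQ_insertTop (σ : Fin (2 * n) → Fin (n + 1)) (hg : g ≤ 2 * n) :
    lapQ (insertTop σ g)
        + (if LeftAscentPlateau (sval σ (g - 1)) (sval σ g) (sval σ (g + 1)) then 1 else 0)
        + (if LeftAscentPlateau (sval σ g) (sval σ (g + 1)) (sval σ (g + 2)) then 1 else 0) =
      lapQ σ + 1 := by
  have h := windowCount_insertTop LeftAscentPlateau σ hg
  rw [← lapQ_eq_windowCount, ← lapQ_eq_windowCount] at h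
  have := sval_le σ g
  have := sval_le σ (g + 1)
  split_ifs at h ⊢ <;> omega

/-- The new window `(σ_{g-1}, σ_g, n+1)` is a double ascent iff `σ_{g-1} < σ_g`; as an ascent is
followed by a weak ascent, this happens iff the old window at `g` is a double ascent or a left
ascent-plateau. -/
lemma dascQ_insertTop {σ : Fin (2 * n) → Fin (n + 1)} (hσ : IsStirlingWord n (sval σ))
    (hg : g ≤ 2 * n) :
    dascQ (insertTop σ g)
        + (if DoubleAscent (sval σ g) (sval σ (g + 1)) (sval σ (g + 2)) then 1 else 0) =
      dascQ σ
        + (if LeftAscentPlateau (sval σ (g - 1)) (sval σ g) (sval σ (g + 1)) then 1 else 0) := by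
  have h := windowCount_insertTop DoubleAscent σ hg
  rw [← dascQ_eq_windowCount, ← dascQ_eq_windowCount] at h
  have := sval_le σ g
  have := sval_le σ (g + 1)
  have hweak : sval σ (g - 1) < sval σ g → sval σ g ≤ sval σ (g + 1) := hσ.le_succ_of_pred_lt
  split_ifs at h ⊢ <;> omega

/-- The new window `(n+1, σ_{g+1}, σ_{g+2})` is a descent-plateau iff `0 < σ_{g+1} = σ_{g+2}`; as no
letter occurs three times in a row, this happens iff the old window at `g + 1` is a descent-plateau
or a left ascent-plateau. -/
lemma dpQ_insertTop {σ : Fin (2 * n) → Fin (n + 1)} (hσ : IsStirlingWord n (sval σ))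
    (hg : g ≤ 2 * n) :
    dpQ (insertTop σ g)
        + (if DescentPlateau (sval σ (g - 1)) (sval σ g) (sval σ (g + 1)) then 1 else 0) =
      dpQ σ
        + (if LeftAscentPlateau (sval σ g) (sval σ (g + 1)) (sval σ (g + 2)) then 1 else 0) := by
  have h := windowCount_insertTop DescentPlateau σ hg
  have hτ : IsStirlingWord (n + 1) (sval (insertTop σ g)) := by
    rw [sval_insertTop σ hg]
    exact hσ.insertPair hg
  rw [← dpQ_eq_windowCount hσ, ← dpQ_eq_windowCount hτ] at h
  have := sval_le σ g
  have := sval_le σ (g + 1)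
  have hnt : 0 < sval σ g → sval σ g = sval σ (g + 1) → sval σ (g + 1) ≠ sval σ (g + 2) :=
    hσ.succ_ne_add_two
  split_ifs at h ⊢ <;> omega

end InsertionRules

def zExponent {n : ℕ} (σ : Fin (2 * n) → Fin (n + 1)) : ℕ :=
  2 * n - 2 * lapQ σ - dascQ σ - dpQ σ

abbrev PlainGap (f : ℕ → ℕ) (g : ℕ) : Prop :=
  ¬ LeftAscentPlateau (f g) (f (g + 1)) (f (g + 2)) ∧
    ¬ DoubleAscent (f g) (f (g + 1)) (f (g + 2)) ∧
    ¬ LeftAscentPlateau (f (g - 1)) (f g) (f (g + 1)) ∧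
    ¬ DescentPlateau (f (g - 1)) (f g) (f (g + 1))

def stirlingStep {M : Type*} [AddCommMonoid M] (w : ℕ → ℕ → ℕ → ℕ → M) (a b c e : ℕ) : M :=
  a • w a b (c + 1) (e + 1) + b • w (a + 1) (b - 1) c (e + 1) + a • w a (b + 1) c (e + 1)
    + c • w (a + 1) b (c - 1) (e + 1) + (e + 1) • w (a + 1) b c e

section Gaps

variable {n : ℕ} {σ : Fin (2 * n) → Fin (n + 1)}

lemma card_filter_gap_classes (hσ : IsStirlingWord n (sval σ)) :
    #{g ∈ range (2 * n + 1) | LeftAscentPlateau (sval σ g) (sval σ (g + 1)) (sval σ (g + 2))}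
        = lapQ σ ∧
      #{g ∈ range (2 * n + 1) | DoubleAscent (sval σ g) (sval σ (g + 1)) (sval σ (g + 2))}
        = dascQ σ ∧
      #{g ∈ range (2 * n + 1) | LeftAscentPlateau (sval σ (g - 1)) (sval σ g) (sval σ (g + 1))}
        = lapQ σ ∧
      #{g ∈ range (2 * n + 1) | DescentPlateau (sval σ (g - 1)) (sval σ g) (sval σ (g + 1))}
        = dpQ σ := by
  have hf0 : sval σ 0 = 0 := hσ.eq_zero 0 (Or.inl rfl)
  have hf1 : sval σ (2 * n + 1) = 0 := hσ.eq_zero _ (Or.inr (by omega))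
  rw [lapQ_eq_windowCount, dascQ_eq_windowCount, dpQ_eq_windowCount hσ]
  exact ⟨card_filter_range_window_succ LeftAscentPlateau (fun _ _ _ h => by omega) hf0,
    card_filter_range_window_succ DoubleAscent (fun _ _ _ h => by omega) hf0,
    card_filter_range_window LeftAscentPlateau (fun _ _ _ h => by omega) hf1,
    card_filter_range_window DescentPlateau (fun _ _ _ h => h.1) hf1⟩

lemma card_filter_plainGap (hσ : IsStirlingWord n (sval σ)) :
    #{g ∈ range (2 * n + 1) | PlainGap (sval σ) g} = zExponent σ + 1 ∧
      2 * lapQ σ + dascQ σ + dpQ σ ≤ 2 * n := by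
  obtain ⟨hP, hQ, hR, hS⟩ := card_filter_gap_classes hσ
  have hpart : ∑ g ∈ range (2 * n + 1),
      ((if LeftAscentPlateau (sval σ g) (sval σ (g + 1)) (sval σ (g + 2)) then 1 else 0)
        + (if DoubleAscent (sval σ g) (sval σ (g + 1)) (sval σ (g + 2)) then 1 else 0)
        + (if LeftAscentPlateau (sval σ (g - 1)) (sval σ g) (sval σ (g + 1)) then 1 else 0)
        + (if DescentPlateau (sval σ (g - 1)) (sval σ g) (sval σ (g + 1)) then 1 else 0)
        + (if PlainGap (sval σ) g then 1 else 0)) = ∑ g ∈ range (2 * n + 1), 1 :=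
    sum_congr rfl fun g _ => by split_ifs <;> omega
  simp only [sum_add_distrib, ← card_filter, hP, hQ, hR, hS, sum_const, card_range,
    smul_eq_mul, mul_one] at hpart
  have hlast : PlainGap (sval σ) (2 * n) := by
    have := hσ.eq_zero (2 * n + 1) (Or.inr (by omega))
    have := hσ.eq_zero (2 * n + 2) (Or.inr (by omega))
    omega
  have : 0 < #{g ∈ range (2 * n + 1) | PlainGap (sval σ) g} :=
    card_pos.mpr ⟨2 * n, mem_filter.mpr ⟨mem_range.mpr (by omega), hlast⟩⟩
  rw [zExponent]
  omega

lemma weight_insertTop {M : Type*} [AddCommMonoid M] (w : ℕ → ℕ → ℕ → ℕ → M) {g : ℕ}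
    (hσ : IsStirlingWord n (sval σ)) (hE : 2 * lapQ σ + dascQ σ + dpQ σ ≤ 2 * n)
    (hg : g ≤ 2 * n) :
    w (lapQ (insertTop σ g)) (dascQ (insertTop σ g)) (dpQ (insertTop σ g))
        (zExponent (insertTop σ g)) =
      (if LeftAscentPlateau (sval σ g) (sval σ (g + 1)) (sval σ (g + 2))
          then w (lapQ σ) (dascQ σ) (dpQ σ + 1) (zExponent σ + 1) else 0)
        + (if DoubleAscent (sval σ g) (sval σ (g + 1)) (sval σ (g + 2))
          then w (lapQ σ + 1) (dascQ σ - 1) (dpQ σ) (zExponent σ + 1) else 0)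
        + (if LeftAscentPlateau (sval σ (g - 1)) (sval σ g) (sval σ (g + 1))
          then w (lapQ σ) (dascQ σ + 1) (dpQ σ) (zExponent σ + 1) else 0)
        + (if DescentPlateau (sval σ (g - 1)) (sval σ g) (sval σ (g + 1))
          then w (lapQ σ + 1) (dascQ σ) (dpQ σ - 1) (zExponent σ + 1) else 0)
        + (if PlainGap (sval σ) g
          then w (lapQ σ + 1) (dascQ σ) (dpQ σ) (zExponent σ) else 0) := by
  have h1 := lapQ_insertTop σ hg
  have h2 := dascQ_insertTop hσ hg
  have h3 := dpQ_insertTop hσ hg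
  simp only [zExponent]
  split_ifs at h1 h2 h3 ⊢ <;> (try simp only [add_zero, zero_add]) <;>
    first
    | (exfalso; omega)
    | exact congr (congr (congr (congrArg w (by omega)) (by omega)) (by omega)) (by omega)

theorem sum_weight_insertTop {M : Type*} [AddCommMonoid M] (w : ℕ → ℕ → ℕ → ℕ → M)
    (hσ : IsStirlingWord n (sval σ)) :
    ∑ g ∈ range (2 * n + 1), w (lapQ (insertTop σ g)) (dascQ (insertTop σ g))
        (dpQ (insertTop σ g)) (zExponent (insertTop σ g)) =
      stirlingStep w (lapQ σ) (dascQ σ) (dpQ σ) (zExponent σ) := by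
  obtain ⟨hP, hQ, hR, hS⟩ := card_filter_gap_classes hσ
  obtain ⟨hT, hE⟩ := card_filter_plainGap hσ
  rw [sum_congr rfl fun g hg => weight_insertTop w hσ hE (by rw [mem_range] at hg; omega)]
  simp only [sum_add_distrib, ← sum_filter, sum_const, hP, hQ, hR, hS, hT]
  rfl

end Gaps

section Derivation

variable {R A : Type*} [CommSemiring R] [CommSemiring A] [Algebra R A]

def stirlingTerm (x y z p q : A) (a b c e : ℕ) : A := (x * y) ^ a * q ^ b * p ^ c * z ^ e

variable (D : Derivation R A A) {x y z p q : A}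

lemma Derivation.apply_pow_of_apply_eq_mul {t s : A} (h : D t = t * s) (k : ℕ) :
    D (t ^ k) = k • (t ^ k * s) := by
  cases k with
  | zero => simp
  | succ k =>
    rw [Derivation.leibniz_pow, h, Nat.add_sub_cancel, smul_eq_mul]
    congr 1
    ring

lemma Derivation.apply_mul_stirlingTerm (hx : D x = x * z * q) (hy : D y = y * z * p)
    (hz : D z = x * y * z) (hp : D p = x * y * z) (hq : D q = x * y * z) (a b c e : ℕ) :
    D (z * stirlingTerm x y z p q a b c e) = z * stirlingStep (stirlingTerm x y z p q) a b c e := by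
  have hxy : D (x * y) = x * y * (z * p + z * q) := by
    rw [Derivation.leibniz, hx, hy, smul_eq_mul, smul_eq_mul]
    ring
  have hz' : D z = z * (x * y) := by rw [hz]; ring
  simp only [stirlingTerm, stirlingStep, Derivation.leibniz, smul_eq_mul,
    D.apply_pow_of_apply_eq_mul hxy, D.apply_pow_of_apply_eq_mul hz', Derivation.leibniz_pow, hp,
    hq, hz, nsmul_eq_mul]
  push_cast
  ring

theorem Derivation.pow_apply_eq_sum_StirlingSet (hx : D x = x * z * q) (hy : D y = y * z * p)
    (hz : D z = x * y * z) (hp : D p = x * y * z) (hq : D q = x * y * z) (n : ℕ) :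
    (D.toLinearMap ^ n) z = z * ∑ σ ∈ StirlingSet n,
      stirlingTerm x y z p q (lapQ σ) (dascQ σ) (dpQ σ) (zExponent σ) := by
  induction n with
  | zero =>
    have h0 : StirlingSet 0 = {Fin.elim0} := by decide
    simp [h0, stirlingTerm, zExponent, lapQ, dascQ, dpQ]
  | succ n ih =>
    rw [pow_succ', Module.End.mul_apply, ih, mul_sum, map_sum, sum_StirlingSet_succ, mul_sum]
    refine sum_congr rfl fun σ hσ => ?_
    rw [sum_weight_insertTop _ ((mem_StirlingSet_iff σ).mp hσ)]
    exact D.apply_mul_stirlingTerm hx hy hz hp hq _ _ _ _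

end Derivation

theorem statement_10
    (D : Derivation ℚ (MvPolynomial (Fin 5) ℚ) (MvPolynomial (Fin 5) ℚ))
    (hx : D (X 0) = X 0 * X 2 * X 4)
    (hy : D (X 1) = X 1 * X 2 * X 3)
    (hz : D (X 2) = X 0 * X 1 * X 2)
    (hp : D (X 3) = X 0 * X 1 * X 2)
    (hq : D (X 4) = X 0 * X 1 * X 2) (n : ℕ) :
    (D.toLinearMap ^ n) (X 2) =
      X 2 * ∑ σ ∈ StirlingSet n,
        (X 0 * X 1) ^ lapQ σ * X 4 ^ dascQ σ * X 3 ^ dpQ σ *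
          X 2 ^ (2 * n - 2 * lapQ σ - dascQ σ - dpQ σ) :=
  D.pow_apply_eq_sum_StirlingSet hx hy hz hp hq n
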